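/- arXiv:2504.12226 — 3 statements merged into one kernel-verified Lean document; each statement's English description precedes it below -/
import Mathlib

section
/- Let A be an affine hyperplane arrangement. Then every modular ideal of L(A) is graded, i.e., all maximal elements of a modular ideal have the same rank. -/
open Polynomial
open scoped Classical Pointwise

namespace HypArr

variable {K V : Type*} [Field K] [AddCommGroup V] [Module K V] [FiniteDimensional K V]

/-- `A` is an affine hyperplane arrangement: a finite set of affine hyperplanes,
i.e. nonempty affine subspaces of codimension one. -/
def IsArrangement (A : Finset (AffineSubspace K V)) : Prop :=
  ∀ H ∈ A, H ≠ ⊥ ∧ Module.finrank K V = Module.finrank K H.direction + 1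

/-- The intersection poset `L(A)`: all nonempty intersections of subfamilies of `A`
(the empty intersection being the whole space `⊤`).  The order of `L(A)` is *reverse*
inclusion, so `X ≤ Y` in `L(A)` corresponds to `Y ≤ X` as affine subspaces; the
minimal element `0̂` of `L(A)` is the whole space `⊤`. -/
noncomputable def poset (A : Finset (AffineSubspace K V)) : Finset (AffineSubspace K V) :=
  (A.powerset.image fun S => S.inf id).filter (· ≠ ⊥)

/-- The rank of an element of `L(A)`: its codimension in `V`. -/
noncomputable def rk (X : AffineSubspace K V) : ℕ :=
  Module.finrank K V - Module.finrank K X.direction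

/-- The rank `r(A)` of the arrangement: the maximal rank of an element of `L(A)`. -/
noncomputable def rank (A : Finset (AffineSubspace K V)) : ℕ := (poset A).sup rk

/-- An ideal of `L(A)` (with respect to the reverse-inclusion order of `L(A)`):
a downward closed subset of `L(A)`. -/
def IsIdeal (A I : Finset (AffineSubspace K V)) : Prop :=
  I ⊆ poset A ∧ ∀ X ∈ I, ∀ Y ∈ poset A, X ≤ Y → Y ∈ I

/-- The principal ideal `⟨X⟩ = {Y ∈ L(A) : Y ≤ X}` of `L(A)` (in the
reverse-inclusion order of `L(A)`, i.e. `{Y ∈ L(A) : X ⊆ Y}`). -/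
noncomputable def principal (A : Finset (AffineSubspace K V)) (X : AffineSubspace K V) :
    Finset (AffineSubspace K V) :=
  (poset A).filter fun Y => X ≤ Y

/-- The meet `X ∧ Y` in `L(A)`: the greatest element of `L(A)` below both `X` and `Y`
(in the reverse-inclusion order); in terms of affine subspaces it is the smallest
element of `L(A)` containing both `X` and `Y`.  In particular `X ∧ Y = 0̂` iff
`lmeet A X Y = ⊤`. -/
noncomputable def lmeet (A : Finset (AffineSubspace K V)) (X Y : AffineSubspace K V) :
    AffineSubspace K V :=
  sInf {W | W ∈ poset A ∧ X ≤ W ∧ Y ≤ W}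

/-- An ideal decomposition `{I_1, …, I_m}` of `L(A)`:
(I1) for every `X ∈ L(A) \ {0̂}` some `I j ∩ ⟨X⟩` is a nontrivial principal ideal;
(I2) joins `X_1 ∨ ⋯ ∨ X_m` (i.e. intersections) of members of the ideals exist;
(I3) these joins satisfy the rank condition. -/
def IsIdealDecomposition (A : Finset (AffineSubspace K V)) {m : ℕ}
    (I : Fin m → Finset (AffineSubspace K V)) : Prop :=
  (∀ i, IsIdeal A (I i)) ∧
  (∀ X ∈ poset A, X ≠ ⊤ →
    ∃ j, ∃ Z ∈ poset A, Z ≠ ⊤ ∧ I j ∩ principal A X = principal A Z) ∧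
  (∀ f : Fin m → AffineSubspace K V, (∀ i, f i ∈ I i) →
    Finset.univ.inf f ≠ (⊥ : AffineSubspace K V)) ∧
  (∀ f : Fin m → AffineSubspace K V, (∀ i, f i ∈ I i) →
    rk (Finset.univ.inf f) = ∑ i, rk (f i))

/-- The meet-complement `I^c = {Y ∈ L(A) : Y ∧ X = 0̂ for all X ∈ I}`. -/
noncomputable def meetCompl (A I : Finset (AffineSubspace K V)) : Finset (AffineSubspace K V) :=
  (poset A).filter fun Y => ∀ X ∈ I, lmeet A X Y = ⊤

/-- An ideal `I` is modular if `{I, I^c}` is an ideal decomposition of `L(A)`. -/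
def IsModularIdeal (A I : Finset (AffineSubspace K V)) : Prop :=
  IsIdealDecomposition A ![I, meetCompl A I]

/-- `μ` is the Möbius function `μ(0̂, ·)` of the finite intersection poset `P`
(ordered by reverse inclusion, with minimal element the maximal affine subspace in `P`):
the sum of `μ` over an interval `[0̂, X]` is `1` if `X = 0̂` and `0` otherwise. -/
def IsMobiusOn (P : Finset (AffineSubspace K V)) (μ : AffineSubspace K V → ℤ) : Prop :=
  ∀ X ∈ P, ∑ Z ∈ P.filter (fun Z => X ≤ Z), μ Z = if ∀ Z ∈ P, Z ≤ X then 1 else 0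

/-- The characteristic polynomial `χ(t) = ∑_{X ∈ P} μ(X) t^{dim X}` of an
intersection poset `P` with Möbius function `μ`. -/
noncomputable def charPolyOn (P : Finset (AffineSubspace K V)) (μ : AffineSubspace K V → ℤ) :
    Polynomial ℤ :=
  ∑ X ∈ P, C (μ X) * Polynomial.X ^ (Module.finrank K X.direction)

/-- The characteristic polynomial `χ̃(I, t) = ∑_{X ∈ I} μ(X) t^{r(I) - r(X)}` of an ideal. -/
noncomputable def tildeChi (μ : AffineSubspace K V → ℤ) (I : Finset (AffineSubspace K V)) :
    Polynomial ℤ :=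
  ∑ X ∈ I, C (μ X) * Polynomial.X ^ (I.sup rk - rk X)

/-- A central arrangement: the intersection of all hyperplanes is nonempty. -/
def IsCentral (A : Finset (AffineSubspace K V)) : Prop := A.inf id ≠ ⊥

/-- A modular element `Z ∈ L(A)`: `r(Z) + r(X) = r(Z ∧ X) + r(Z ∨ X)` for all `X ∈ L(A)`
(the join `Z ∨ X` being the intersection `Z ⊓ X` of affine subspaces). -/
def IsModularElement (A : Finset (AffineSubspace K V)) (Z : AffineSubspace K V) : Prop :=
  Z ∈ poset A ∧ ∀ X ∈ poset A, rk Z + rk X = rk (lmeet A Z X) + rk (Z ⊓ X)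

/-- The intersection poset of the restriction `B^W = {H ∩ W : H ∈ B, H ∩ W ≠ ∅}`
of the arrangement `B` to the affine subspace `W`, realized as a finset of affine
subspaces of the ambient space (with minimal element `W`). -/
noncomputable def tracePoset (B : Finset (AffineSubspace K V)) (W : AffineSubspace K V) :
    Finset (AffineSubspace K V) :=
  (((B.filter fun H => H ⊓ W ≠ ⊥).image fun H => H ⊓ W).powerset.image
      fun S => W ⊓ S.inf id).filter (· ≠ ⊥)

/-- A modular subarrangement `B ⊆ A`: `L(B)`, viewed as a subposet of `L(A)`,
is a modular ideal of `L(A)`. -/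
def IsModularSub (A B : Finset (AffineSubspace K V)) : Prop :=
  B ⊆ A ∧ IsModularIdeal A (poset B)

end HypArr

/-!
Fix a maximal element `X` of the modular ideal `I` (a `Minimal` element for the inclusion order
of subspaces used below) and an element `W` of `I^c` of maximal rank.  The heart of the proof
is that cutting `X ∨ W'` (for `W' ∈ I^c`) with a hyperplane of `A` yields again an element
`X ∨ W''` with `W'' ∈ I^c`; this is a case analysis on condition (I1) applied to the cut.
Since rank is additive on such joins, the maximality of `rk W` forces `X ∨ W` to be contained
in or disjoint from every hyperplane.  Such an element of `L(A)` has direction contained in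
every direction of `L(A)`, hence maximal rank, so `rk X + rk W ≥ rk (Y ∨ W) = rk Y + rk W`
for every `Y ∈ I`.
-/

namespace HypArr

section

variable {K V : Type*} [Field K] [AddCommGroup V] [Module K V]

section Rank

theorem rk_top : rk (⊤ : AffineSubspace K V) = 0 := by
  rw [rk, AffineSubspace.direction_top, finrank_top, Nat.sub_self]

variable [FiniteDimensional K V]

theorem rk_le_of_le {X Y : AffineSubspace K V} (h : X ≤ Y) : rk Y ≤ rk X := by
  have := Submodule.finrank_mono (AffineSubspace.direction_le h)
  unfold rk
  omega

theorem rk_lt_of_lt {X Y : AffineSubspace K V} (h : X < Y) (hX : X ≠ ⊥) : rk Y < rk X := by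
  have hdir : X.direction < Y.direction := by
    refine lt_of_le_of_ne (AffineSubspace.direction_le h.le) fun he => h.ne ?_
    exact AffineSubspace.eq_of_direction_eq_of_nonempty_of_le he
      ((AffineSubspace.nonempty_iff_ne_bot X).2 hX) h.le
  have := Submodule.finrank_lt_finrank_of_lt hdir
  have := Submodule.finrank_le Y.direction
  unfold rk
  omega

theorem eq_of_le_of_rk_le {X Y : AffineSubspace K V} (h : X ≤ Y) (hX : X ≠ ⊥)
    (hrk : rk X ≤ rk Y) : X = Y := by
  by_contra hne
  exact (rk_lt_of_lt (lt_of_le_of_ne h hne) hX).not_ge hrk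

theorem rk_pos {X : AffineSubspace K V} (hX : X ≠ ⊥) (htop : X ≠ ⊤) : 0 < rk X := by
  by_contra h
  exact htop (eq_of_le_of_rk_le le_top hX (by rw [rk_top]; omega))

theorem rk_inf_le {X Y : AffineSubspace K V} (h : X ⊓ Y ≠ ⊥) :
    rk (X ⊓ Y) ≤ rk X + rk Y := by
  obtain ⟨p, hp⟩ := (AffineSubspace.nonempty_iff_ne_bot _).2 h
  have := Submodule.finrank_sup_add_finrank_inf_eq X.direction Y.direction
  have := Submodule.finrank_le (X.direction ⊔ Y.direction)
  have := Submodule.finrank_le X.direction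
  have := Submodule.finrank_le Y.direction
  unfold rk
  rw [AffineSubspace.direction_inf_of_mem_inf hp]
  omega

end Rank

section Poset

variable {A : Finset (AffineSubspace K V)}

theorem mem_poset_iff {X : AffineSubspace K V} :
    X ∈ poset A ↔ (∃ S ⊆ A, S.inf id = X) ∧ X ≠ ⊥ := by
  simp [poset, and_comm]

theorem top_mem_poset : (⊤ : AffineSubspace K V) ∈ poset A :=
  mem_poset_iff.2 ⟨⟨∅, Finset.empty_subset _, Finset.inf_empty⟩,
    (AffineSubspace.nonempty_iff_ne_bot _).1 ⟨0, AffineSubspace.mem_top K V 0⟩⟩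

theorem ne_bot_of_mem_poset {X : AffineSubspace K V} (h : X ∈ poset A) : X ≠ ⊥ :=
  (mem_poset_iff.1 h).2

theorem inf_mem_poset {X Y : AffineSubspace K V} (hX : X ∈ poset A) (hY : Y ∈ poset A)
    (h : X ⊓ Y ≠ ⊥) : X ⊓ Y ∈ poset A := by
  obtain ⟨⟨S, hS, rfl⟩, -⟩ := mem_poset_iff.1 hX
  obtain ⟨⟨T, hT, rfl⟩, -⟩ := mem_poset_iff.1 hY
  exact mem_poset_iff.2 ⟨⟨S ∪ T, Finset.union_subset hS hT, Finset.inf_union⟩, h⟩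

theorem mem_poset_of_mem (hA : IsArrangement A) {H : AffineSubspace K V} (hH : H ∈ A) :
    H ∈ poset A :=
  mem_poset_iff.2 ⟨⟨{H}, Finset.singleton_subset_iff.2 hH, Finset.inf_singleton⟩, (hA H hH).1⟩

theorem rk_eq_one_of_mem (hA : IsArrangement A) {H : AffineSubspace K V} (hH : H ∈ A) :
    rk H = 1 := by
  have := (hA H hH).2
  unfold rk
  omega

theorem le_lmeet_right (X Y : AffineSubspace K V) : Y ≤ lmeet A X Y :=
  le_sInf fun _ hW => hW.2.2

theorem exists_of_lmeet_ne_top {X Y : AffineSubspace K V} (h : lmeet A X Y ≠ ⊤) :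
    ∃ W ∈ poset A, X ≤ W ∧ Y ≤ W ∧ W ≠ ⊤ := by
  by_contra! hW
  exact h (sInf_eq_top.2 fun W ⟨hWP, hXW, hYW⟩ => hW W hWP hXW hYW)

end Poset

section Vertex

theorem le_direction_finsetInf {D : Submodule K V} (S : Finset (AffineSubspace K V))
    (hS : S.inf id ≠ ⊥) (h : ∀ H ∈ S, D ≤ H.direction) : D ≤ (S.inf id).direction := by
  induction S using Finset.induction_on with
  | empty => simp
  | insert H S _ ih =>
    rw [Finset.inf_insert, id_eq] at hS ⊢
    obtain ⟨p, hp⟩ := (AffineSubspace.nonempty_iff_ne_bot _).2 hS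
    rw [AffineSubspace.direction_inf_of_mem_inf hp]
    exact le_inf (h H (Finset.mem_insert_self H S))
      (ih (fun hb => hS (by rw [hb, inf_bot_eq]))
        fun H' hH' => h H' (Finset.mem_insert_of_mem hH'))

theorem direction_le_of_inf_eq_bot [FiniteDimensional K V] {M H : AffineSubspace K V}
    (hM : M ≠ ⊥) (hH : H ≠ ⊥) (hcodim : Module.finrank K V = Module.finrank K H.direction + 1)
    (h : M ⊓ H = ⊥) :
    M.direction ≤ H.direction := by
  by_contra hnd
  have hlt : H.direction < M.direction ⊔ H.direction :=
    lt_of_le_of_ne le_sup_right fun he => hnd (le_sup_left.trans_eq he.symm)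
  have := Submodule.finrank_lt_finrank_of_lt hlt
  have := Submodule.finrank_le (M.direction ⊔ H.direction)
  have htop : M.direction ⊔ H.direction = ⊤ := Submodule.eq_top_of_finrank_eq (by omega)
  obtain ⟨p, hp⟩ := AffineSubspace.inter_nonempty_of_nonempty_of_sup_direction_eq_top
    ((AffineSubspace.nonempty_iff_ne_bot _).2 hM) ((AffineSubspace.nonempty_iff_ne_bot _).2 hH)
    htop
  exact (AffineSubspace.nonempty_iff_ne_bot _).1 ⟨p, hp⟩ h

theorem rk_le_of_forall_inf_ne_bot_le [FiniteDimensional K V] {A : Finset (AffineSubspace K V)}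
    (hA : IsArrangement A) {M Z : AffineSubspace K V} (hM : M ≠ ⊥)
    (hvertex : ∀ H ∈ A, M ⊓ H ≠ ⊥ → M ≤ H) (hZ : Z ∈ poset A) : rk Z ≤ rk M := by
  obtain ⟨⟨S, hSA, rfl⟩, hZbot⟩ := mem_poset_iff.1 hZ
  have hdir : M.direction ≤ (S.inf id).direction := by
    refine le_direction_finsetInf S hZbot fun H hHS => ?_
    by_cases hMH : M ⊓ H = ⊥
    · exact direction_le_of_inf_eq_bot hM (hA H (hSA hHS)).1 (hA H (hSA hHS)).2 hMH
    · exact AffineSubspace.direction_le (hvertex H (hSA hHS) hMH)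
  have := Submodule.finrank_mono hdir
  have := Submodule.finrank_le (S.inf id).direction
  unfold rk
  omega

end Vertex

section ModularIdeal

variable {A I : Finset (AffineSubspace K V)}

theorem IsModularIdeal.isIdeal (hI : IsModularIdeal A I) : IsIdeal A I := by
  simpa using hI.1 0

theorem mem_meetCompl_iff {W : AffineSubspace K V} :
    W ∈ meetCompl A I ↔ W ∈ poset A ∧ ∀ X ∈ I, lmeet A X W = ⊤ := Finset.mem_filter

theorem top_mem_meetCompl : (⊤ : AffineSubspace K V) ∈ meetCompl A I :=
  mem_meetCompl_iff.2 ⟨top_mem_poset, fun X _ => top_unique (le_lmeet_right X ⊤)⟩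

theorem mem_poset_of_mem_meetCompl {W : AffineSubspace K V} (hW : W ∈ meetCompl A I) :
    W ∈ poset A :=
  (mem_meetCompl_iff.1 hW).1

theorem isLeast_of_inter_principal_eq {J : Finset (AffineSubspace K V)}
    {T Z : AffineSubspace K V} (hJ : J ⊆ poset A) (hZ : Z ∈ poset A)
    (h : J ∩ principal A T = principal A Z) :
    IsLeast {Y | Y ∈ J ∧ T ≤ Y} Z := by
  have hmem : ∀ Y, Y ∈ J ∧ T ≤ Y ↔ Y ∈ poset A ∧ Z ≤ Y := fun Y => by
    rw [← Finset.mem_filter (p := (Z ≤ ·)), ← principal, ← h, Finset.mem_inter, principal,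
      Finset.mem_filter]
    exact ⟨fun ⟨hY, hTY⟩ => ⟨hY, hJ hY, hTY⟩, fun ⟨hY, _, hTY⟩ => ⟨hY, hTY⟩⟩
  exact ⟨(hmem Z).2 ⟨hZ, le_rfl⟩, fun Y hY => ((hmem Y).1 hY).2⟩

/-- Condition (I1) for `{I, I^c}`, in the inclusion order of subspaces. -/
theorem IsModularIdeal.exists_isLeast (hI : IsModularIdeal A I) {T : AffineSubspace K V}
    (hT : T ∈ poset A) (htop : T ≠ ⊤) :
    ∃ Z ≠ ⊤, IsLeast {Y | Y ∈ I ∧ T ≤ Y} Z ∨ IsLeast {Y | Y ∈ meetCompl A I ∧ T ≤ Y} Z := by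
  obtain ⟨j, Z, hZ, hZtop, h⟩ := hI.2.1 T hT htop
  refine ⟨Z, hZtop, ?_⟩
  fin_cases j
  · exact .inl (isLeast_of_inter_principal_eq hI.isIdeal.1 hZ (by simpa using h))
  · exact .inr (isLeast_of_inter_principal_eq (Finset.filter_subset _ _) hZ (by simpa using h))

theorem IsModularIdeal.inf_ne_bot_and_rk_inf (hI : IsModularIdeal A I)
    {X W : AffineSubspace K V} (hX : X ∈ I) (hW : W ∈ meetCompl A I) :
    X ⊓ W ≠ ⊥ ∧ rk (X ⊓ W) = rk X + rk W := by
  have hmem : ∀ i, ![X, W] i ∈ ![I, meetCompl A I] i := by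
    intro i
    fin_cases i <;> simpa
  have hinf : Finset.univ.inf ![X, W] = X ⊓ W := by
    simp [Fin.univ_succ, Finset.inf_insert]
  have h2 := hI.2.2.1 _ hmem
  have h3 := hI.2.2.2 _ hmem
  rw [hinf] at h2 h3
  exact ⟨h2, by simpa using h3⟩

theorem IsModularIdeal.inf_ne_bot (hI : IsModularIdeal A I) {X W : AffineSubspace K V}
    (hX : X ∈ I) (hW : W ∈ meetCompl A I) : X ⊓ W ≠ ⊥ :=
  (hI.inf_ne_bot_and_rk_inf hX hW).1

theorem IsModularIdeal.rk_inf (hI : IsModularIdeal A I) {X W : AffineSubspace K V}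
    (hX : X ∈ I) (hW : W ∈ meetCompl A I) : rk (X ⊓ W) = rk X + rk W :=
  (hI.inf_ne_bot_and_rk_inf hX hW).2

theorem IsModularIdeal.exists_rk_eq_one_of_not_mem_meetCompl [FiniteDimensional K V]
    (hI : IsModularIdeal A I)
    {W₀ W₁ : AffineSubspace K V} (hW₀ : W₀ ∈ meetCompl A I) (hW₁ : W₁ ∈ poset A)
    (hW₁c : W₁ ∉ meetCompl A I) (hle : W₁ ≤ W₀) (hrk : rk W₁ ≤ rk W₀ + 1) :
    ∃ M ∈ I, rk M = 1 ∧ W₁ ≤ M ∧ M ⊓ W₀ = W₁ := by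
  obtain ⟨X, hXI, hXW₁⟩ : ∃ X ∈ I, lmeet A X W₁ ≠ ⊤ := by
    by_contra! h
    exact hW₁c (mem_meetCompl_iff.2 ⟨hW₁, h⟩)
  obtain ⟨M, hMP, hXM, hW₁M, hMtop⟩ := exists_of_lmeet_ne_top hXW₁
  have hMI : M ∈ I := hI.isIdeal.2 X hXI M hMP hXM
  have hW₁MW₀ : W₁ ≤ M ⊓ W₀ := le_inf hW₁M hle
  have := rk_pos (ne_bot_of_mem_poset hMP) hMtop
  have := rk_le_of_le hW₁MW₀
  have := hI.rk_inf hMI hW₀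
  refine ⟨M, hMI, by omega, hW₁M, ?_⟩
  exact (eq_of_le_of_rk_le hW₁MW₀ (ne_bot_of_mem_poset hW₁) (by omega)).symm

theorem isLeast_eq_of_minimal {α : Type*} [PartialOrder α] {s : Set α} {T X Z : α}
    (hX : Minimal (· ∈ s) X) (hTX : T ≤ X) (hZ : IsLeast {Y | Y ∈ s ∧ T ≤ Y} Z) : Z = X :=
  hX.eq_of_le hZ.1.1 (hZ.2 ⟨hX.1, hTX⟩)

theorem IsModularIdeal.exists_isLeast_meetCompl (hI : IsModularIdeal A I)
    {X M T : AffineSubspace K V} (hX : Minimal (· ∈ I) X) (hM : M ∈ I) (hXM : ¬ X ≤ M)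
    (hT : T ∈ poset A) (hTX : T ≤ X) (hTM : T ≤ M) :
    ∃ Z ≠ ⊤, IsLeast {Y | Y ∈ meetCompl A I ∧ T ≤ Y} Z := by
  have htop : T ≠ ⊤ := by
    rintro rfl
    exact hXM (top_le_iff.1 hTX ▸ hTM)
  obtain ⟨Z, hZtop, hZ | hZ⟩ := hI.exists_isLeast hT htop
  · exact absurd (isLeast_eq_of_minimal (s := {Y | Y ∈ I}) hX hTX hZ ▸ hZ.2 ⟨hM, hTM⟩) hXM
  · exact ⟨Z, hZtop, hZ⟩

variable [FiniteDimensional K V]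

theorem IsModularIdeal.inf_le_of_isLeast_meetCompl (hI : IsModularIdeal A I)
    {X M W₀ : AffineSubspace K V} (hX : Minimal (· ∈ I) X) (hM : M ∈ I) (hrkM : rk M = 1)
    (hXM : ¬ X ≤ M) (hU : X ⊓ M ⊓ W₀ ≠ ⊥)
    (hW₀ : IsLeast {Y | Y ∈ meetCompl A I ∧ X ⊓ M ⊓ W₀ ≤ Y} W₀) : X ⊓ W₀ ≤ M := by
  have hTbot : X ⊓ M ≠ ⊥ := ne_bot_of_le_ne_bot hU inf_le_left
  have hT : X ⊓ M ∈ poset A := inf_mem_poset (hI.isIdeal.1 hX.1) (hI.isIdeal.1 hM) hTbot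
  obtain ⟨Z, hZtop, hZ⟩ := hI.exists_isLeast_meetCompl hX hM hXM hT inf_le_left inf_le_right
  have hW₀Z : W₀ ≤ Z := hW₀.2 ⟨hZ.1.1, inf_le_left.trans hZ.1.2⟩
  have hXM_eq : X ⊓ M = X ⊓ Z := by
    refine eq_of_le_of_rk_le (le_inf inf_le_left hZ.1.2) hTbot ?_
    have := rk_inf_le hTbot
    have := rk_pos (ne_bot_of_mem_poset (mem_poset_of_mem_meetCompl hZ.1.1)) hZtop
    rw [hI.rk_inf hX.1 hZ.1.1]
    omega
  calc X ⊓ W₀ ≤ X ⊓ Z := inf_le_inf_left X hW₀Z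
    _ = X ⊓ M := hXM_eq.symm
    _ ≤ M := inf_le_right

theorem IsModularIdeal.exists_inf_eq_inf_inf (hA : IsArrangement A) (hI : IsModularIdeal A I)
    {X W₀ H : AffineSubspace K V} (hX : Minimal (· ∈ I) X) (hW₀ : W₀ ∈ meetCompl A I)
    (hH : H ∈ A) (hU : X ⊓ W₀ ⊓ H ≠ ⊥) : ∃ W ∈ meetCompl A I, X ⊓ W = X ⊓ W₀ ⊓ H := by
  by_cases hW₁ : W₀ ⊓ H ∈ meetCompl A I
  · exact ⟨W₀ ⊓ H, hW₁, (inf_assoc ..).symm⟩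
  by_cases hcut : X ⊓ W₀ ≤ H
  · exact ⟨W₀, hW₀, (inf_eq_left.2 hcut).symm⟩
  set U := X ⊓ W₀ ⊓ H with hU_def
  have hW₀P := mem_poset_of_mem_meetCompl hW₀
  have hHP := mem_poset_of_mem hA hH
  have hUlt : U < X ⊓ W₀ := inf_lt_left.2 hcut
  have hUP : U ∈ poset A :=
    inf_mem_poset (inf_mem_poset (hI.isIdeal.1 hX.1) hW₀P (hI.inf_ne_bot hX.1 hW₀)) hHP hU
  have hUX : U ≤ X := inf_le_left.trans inf_le_left
  have hUW₀ : U ≤ W₀ := inf_le_left.trans inf_le_right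
  have hW₁bot : W₀ ⊓ H ≠ ⊥ := ne_bot_of_le_ne_bot hU (le_inf hUW₀ inf_le_right)
  have hrkW₁ := rk_inf_le hW₁bot
  rw [rk_eq_one_of_mem hA hH] at hrkW₁
  obtain ⟨M, hMI, hrkM, hW₁M, hMW₀⟩ := hI.exists_rk_eq_one_of_not_mem_meetCompl hW₀
    (inf_mem_poset hW₀P hHP hW₁bot) hW₁ inf_le_left hrkW₁
  have hU_eq : U = X ⊓ M ⊓ W₀ := by rw [hU_def, inf_assoc, ← hMW₀, ← inf_assoc]
  have hXM : ¬ X ≤ M := fun h => hUlt.ne (by rw [hU_eq, inf_eq_left.2 h])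
  have hUM : U ≤ M := (le_inf hUW₀ inf_le_right).trans hW₁M
  obtain ⟨Z, -, hZ⟩ := hI.exists_isLeast_meetCompl hX hMI hXM hUP hUX hUM
  rcases (hZ.2 ⟨hW₀, hUW₀⟩ : Z ≤ W₀).lt_or_eq with hZW₀ | rfl
  · -- `Z` gains rank over `W₀`, so `X ∨ Z` is already as small as `U`.
    refine ⟨Z, hZ.1.1, (eq_of_le_of_rk_le (le_inf hUX hZ.1.2) hU ?_).symm⟩
    have := rk_lt_of_lt hZW₀ (ne_bot_of_mem_poset (mem_poset_of_mem_meetCompl hZ.1.1))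
    have hrkU : rk U ≤ rk (X ⊓ W₀) + rk H := rk_inf_le hU
    rw [rk_eq_one_of_mem hA hH, hI.rk_inf hX.1 hW₀] at hrkU
    rw [hI.rk_inf hX.1 hZ.1.1]
    omega
  · rw [hU_eq] at hU hZ
    have := hI.inf_le_of_isLeast_meetCompl hX hMI hrkM hXM hU hZ
    exact absurd (hU_eq ▸ le_inf (le_inf inf_le_left this) inf_le_right) hUlt.not_ge

theorem IsModularIdeal.rk_le_of_minimal (hA : IsArrangement A) (hI : IsModularIdeal A I)
    {X Y : AffineSubspace K V} (hX : Minimal (· ∈ I) X) (hY : Y ∈ I) : rk Y ≤ rk X := by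
  obtain ⟨W, hW, hWmax⟩ := (meetCompl A I).exists_max_image rk ⟨⊤, top_mem_meetCompl⟩
  have hvertex : ∀ H ∈ A, X ⊓ W ⊓ H ≠ ⊥ → X ⊓ W ≤ H := by
    intro H hH hXWH
    obtain ⟨W', hW', hXW'⟩ := hI.exists_inf_eq_inf_inf hA hX hW hH hXWH
    have hrk : rk (X ⊓ W ⊓ H) ≤ rk (X ⊓ W) := by
      rw [← hXW', hI.rk_inf hX.1 hW', hI.rk_inf hX.1 hW]
      exact Nat.add_le_add_left (hWmax W' hW') _
    exact inf_eq_left.1 (eq_of_le_of_rk_le inf_le_left hXWH hrk)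
  have hYW : Y ⊓ W ∈ poset A :=
    inf_mem_poset (hI.isIdeal.1 hY) (mem_poset_of_mem_meetCompl hW) (hI.inf_ne_bot hY hW)
  have := rk_le_of_forall_inf_ne_bot_le hA (hI.inf_ne_bot hX.1 hW) hvertex hYW
  rw [hI.rk_inf hY hW, hI.rk_inf hX.1 hW] at this
  omega

end ModularIdeal

end

/-- **Lemma.** Every modular ideal of `L(A)` is graded: all of its maximal elements
have the same rank.  (In the reverse-inclusion order of `L(A)`, `X` is maximal in `I`
iff every `Z ∈ I` with `Z ⊆ X` equals `X`.) -/
theorem modularIdeal_graded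
    {K V : Type*} [Field K] [AddCommGroup V] [Module K V] [FiniteDimensional K V]
    (A : Finset (AffineSubspace K V)) (hA : IsArrangement A)
    (I : Finset (AffineSubspace K V)) (hI : IsModularIdeal A I) :
    ∀ X ∈ I, ∀ Y ∈ I,
      (∀ Z ∈ I, Z ≤ X → Z = X) → (∀ Z ∈ I, Z ≤ Y → Z = Y) → rk X = rk Y := by
  intro X hX Y hY hmaxX hmaxY
  have hXmin : Minimal (· ∈ I) X := ⟨hX, fun Z hZ hZX => (hmaxX Z hZ hZX).ge⟩
  have hYmin : Minimal (· ∈ I) Y := ⟨hY, fun Z hZ hZY => (hmaxY Z hZ hZY).ge⟩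
  exact le_antisymm (hI.rk_le_of_minimal hA hYmin hX) (hI.rk_le_of_minimal hA hXmin hY)

end HypArr
end

section
/- Let A be an affine hyperplane arrangement and let I be an ideal of L(A). Then I = L(A_I) if and only if for every X ∈ L(A), the ideal ⟨X⟩ ∩ I is a principal ideal of L(A). -/
open Polynomial
open scoped Classical Pointwise

namespace HypArr

lemma mem_poset' {K V : Type*} [Field K] [AddCommGroup V] [Module K V] [FiniteDimensional K V]
    {A : Finset (AffineSubspace K V)} {X : AffineSubspace K V} :
    X ∈ poset A ↔ (∃ S ⊆ A, S.inf id = X) ∧ X ≠ ⊥ := by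
  simp [poset, Finset.mem_filter, Finset.mem_image, Finset.mem_powerset]

lemma hyperplane_mem_poset' {K V : Type*} [Field K] [AddCommGroup V] [Module K V]
    [FiniteDimensional K V] {A : Finset (AffineSubspace K V)} (hA : IsArrangement A)
    {H : AffineSubspace K V} (hH : H ∈ A) : H ∈ poset A :=
  mem_poset'.mpr ⟨⟨{H}, by simpa using hH, by simp⟩, (hA H hH).1⟩

/-- **Lemma.** For an ideal `I` of `L(A)`: `I = L(A_I)` if and only if for every
`X ∈ L(A)` the ideal `⟨X⟩ ∩ I` is a principal ideal of `L(A)`. -/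
theorem ideal_eq_subposet_iff_principal
    {K V : Type*} [Field K] [AddCommGroup V] [Module K V] [FiniteDimensional K V]
    (A : Finset (AffineSubspace K V)) (hA : IsArrangement A)
    (I : Finset (AffineSubspace K V)) (hI : IsIdeal A I) :
    I = poset (A ∩ I) ↔
      ∀ X ∈ poset A, ∃ Z ∈ poset A, principal A X ∩ I = principal A Z := by
  obtain ⟨hIsub, hIup⟩ := hI
  constructor
  · intro hEq X hX
    obtain ⟨⟨T, hTA, hTX⟩, hXbot⟩ := mem_poset'.mp hX
    set S : Finset (AffineSubspace K V) := (A ∩ I).filter (fun H => X ≤ H) with hS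
    set Z : AffineSubspace K V := S.inf id with hZ
    have hXZ : X ≤ Z := Finset.le_inf fun H hH => (Finset.mem_filter.mp hH).2
    have hZbot : Z ≠ ⊥ := fun h => hXbot (le_bot_iff.mp (h ▸ hXZ))
    have hSAI : S ⊆ A ∩ I := Finset.filter_subset _ _
    have hZposetAI : Z ∈ poset (A ∩ I) := mem_poset'.mpr ⟨⟨S, hSAI, rfl⟩, hZbot⟩
    have hZposetA : Z ∈ poset A :=
      mem_poset'.mpr ⟨⟨S, hSAI.trans (Finset.inter_subset_left), rfl⟩, hZbot⟩
    refine ⟨Z, hZposetA, ?_⟩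
    ext Y
    simp only [Finset.mem_inter, principal, Finset.mem_filter]
    constructor
    · rintro ⟨⟨hYp, hXY⟩, hYI⟩
      refine ⟨hYp, ?_⟩
      obtain ⟨⟨T', hT'AI, hT'Y⟩, _⟩ := mem_poset'.mp (hEq ▸ hYI)
      have hT'S : T' ⊆ S := fun H hH => Finset.mem_filter.mpr
        ⟨hT'AI hH, hXY.trans (hT'Y ▸ Finset.inf_le hH : Y ≤ H)⟩
      exact hT'Y ▸ Finset.inf_mono hT'S
    · rintro ⟨hYp, hZY⟩
      exact ⟨⟨hYp, hXZ.trans hZY⟩, hIup Z (hEq ▸ hZposetAI) Y hYp hZY⟩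
  · intro h
    apply Finset.Subset.antisymm
    · intro Y hYI
      obtain ⟨⟨T, hTA, hTY⟩, hYbot⟩ := mem_poset'.mp (hIsub hYI)
      refine mem_poset'.mpr ⟨⟨T, fun H hH => ?_, hTY⟩, hYbot⟩
      refine Finset.mem_inter.mpr ⟨hTA hH, ?_⟩
      exact hIup Y hYI H (hyperplane_mem_poset' hA (hTA hH))
        (hTY ▸ Finset.inf_le hH : Y ≤ H)
    · intro Y hY
      obtain ⟨⟨T, hTAI, hTY⟩, hYbot⟩ := mem_poset'.mp hY
      have hYA : Y ∈ poset A :=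
        mem_poset'.mpr ⟨⟨T, hTAI.trans (Finset.inter_subset_left), hTY⟩, hYbot⟩
      obtain ⟨Z, hZA, hZeq⟩ := h Y hYA
      have hZmem : Z ∈ principal A Y ∩ I := by
        rw [hZeq]; exact Finset.mem_filter.mpr ⟨hZA, le_refl Z⟩
      obtain ⟨hZpr, hZI⟩ := Finset.mem_inter.mp hZmem
      have hYZ : Y ≤ Z := (Finset.mem_filter.mp hZpr).2
      have hZY : Z ≤ Y := by
        rw [← hTY]
        refine Finset.le_inf fun H hH => ?_
        have hHmem : H ∈ principal A Y ∩ I := by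
          refine Finset.mem_inter.mpr ⟨Finset.mem_filter.mpr
            ⟨hyperplane_mem_poset' hA (Finset.inter_subset_left (hTAI hH)),
              hTY ▸ Finset.inf_le hH⟩, (Finset.inter_subset_right (hTAI hH))⟩
        rw [hZeq] at hHmem
        exact (Finset.mem_filter.mp hHmem).2
      have : Y = Z := le_antisymm hYZ hZY
      rw [this]; exact hZI

end HypArr
end

section
/- Let A be an affine hyperplane arrangement and let B be a modular subarrangement of A. Then for each Y ∈ L(B)^c (the meet-complement of the modular ideal L(B)), the map τ_Y : L(B) → {X ∨ Y | X ∈ L(B)} defined by τ_Y(X) = X ∨ Y is an isomorphism of posets. -/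
open Polynomial
open scoped Classical Pointwise

namespace HypArr

/-- **Proposition.** Let `B` be a modular subarrangement of `A`.  Then for every
`Y ∈ L(B)^c`, the map `τ_Y : L(B) → {X ∨ Y : X ∈ L(B)}`, `τ_Y(X) = X ∨ Y = X ∩ Y`,
is an isomorphism of posets. -/
theorem joinMap_orderIso_of_modularSub
    {K V : Type*} [Field K] [AddCommGroup V] [Module K V] [FiniteDimensional K V]
    (A B : Finset (AffineSubspace K V)) (hA : IsArrangement A)
    (hB : IsModularSub A B)
    (Y : AffineSubspace K V) (hY : Y ∈ meetCompl A (poset B)) :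
    ∃ e : {X // X ∈ poset B} ≃ {W // W ∈ (poset B).image (· ⊓ Y)},
      (∀ a : {X // X ∈ poset B}, ((e a : AffineSubspace K V)) = (a : AffineSubspace K V) ⊓ Y) ∧
      (∀ a b : {X // X ∈ poset B}, a.1 ≤ b.1 ↔ (e a).1 ≤ (e b).1) := by
  classical
  obtain ⟨hBA, hid, hI1, hI2, hI3⟩ := hB
  have huniv : (Finset.univ : Finset (Fin 2)) = {0, 1} := by decide
  have hmem : ∀ X ∈ poset B, ∀ i, ![X, Y] i ∈ ![poset B, meetCompl A (poset B)] i := by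
    intro X hX i
    fin_cases i <;> simpa
  have hinf : ∀ X : AffineSubspace K V, Finset.univ.inf ![X, Y] = X ⊓ Y := by
    intro X
    rw [huniv]
    simp
  have hnonbot : ∀ X ∈ poset B, X ⊓ Y ≠ ⊥ := by
    intro X hX
    have := hI2 ![X, Y] (hmem X hX)
    rwa [hinf] at this
  have hrk : ∀ X ∈ poset B, rk (X ⊓ Y) = rk X + rk Y := by
    intro X hX
    have := hI3 ![X, Y] (hmem X hX)
    rw [hinf, Fin.sum_univ_two] at this
    simpa using this
  have hclose : ∀ X ∈ poset B, ∀ X' ∈ poset B, X ⊓ X' ≠ ⊥ → X ⊓ X' ∈ poset B := by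
    intro X hX X' hX' hne
    simp only [poset, Finset.mem_filter, Finset.mem_image, Finset.mem_powerset] at hX hX' ⊢
    obtain ⟨⟨S, hS, rfl⟩, -⟩ := hX
    obtain ⟨⟨S', hS', rfl⟩, -⟩ := hX'
    exact ⟨⟨S ∪ S', Finset.union_subset hS hS', by rw [Finset.inf_union]⟩, hne⟩
  have hposet_ne : ∀ X ∈ poset B, X ≠ ⊥ := by
    intro X hX
    simp only [poset, Finset.mem_filter] at hX
    exact hX.2
  have key : ∀ X ∈ poset B, ∀ X' ∈ poset B, X ⊓ Y ≤ X' ⊓ Y → X ≤ X' := by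
    intro X hX X' hX' hle
    have h1 : X ⊓ Y ≤ X' := hle.trans inf_le_left
    have h2 : X ⊓ Y ≤ X ⊓ X' := le_inf inf_le_left h1
    have hZne : X ⊓ X' ≠ ⊥ := by
      intro h
      exact hnonbot X hX (le_bot_iff.mp (h ▸ h2))
    have hZ : X ⊓ X' ∈ poset B := hclose X hX X' hX' hZne
    have hZY : (X ⊓ X') ⊓ Y = X ⊓ Y := by
      refine le_antisymm (inf_le_inf_right Y inf_le_left) (le_inf h2 inf_le_right)
    have hrkeq : rk (X ⊓ X') = rk X := by
      have e1 := hrk _ hZ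
      rw [hZY, hrk X hX] at e1
      omega
    -- from equal rank and inclusion, conclude equality
    have hdle : (X ⊓ X').direction ≤ X.direction :=
      AffineSubspace.direction_le inf_le_left
    have hfle1 : Module.finrank K (X ⊓ X' : AffineSubspace K V).direction ≤ Module.finrank K V :=
      Submodule.finrank_le _
    have hfle2 : Module.finrank K X.direction ≤ Module.finrank K V :=
      Submodule.finrank_le _
    have hfr : Module.finrank K (X ⊓ X' : AffineSubspace K V).direction
        = Module.finrank K X.direction := by
      simp only [rk] at hrkeq
      omega
    have hdir : (X ⊓ X').direction = X.direction :=
      Submodule.eq_of_le_of_finrank_eq hdle hfr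
    obtain ⟨p, hp⟩ : ((X ⊓ X' : AffineSubspace K V) : Set V).Nonempty := by
      rwa [AffineSubspace.nonempty_iff_ne_bot]
    have hXeq : (X ⊓ X' : AffineSubspace K V) = X :=
      AffineSubspace.ext_of_direction_eq hdir ⟨p, hp, (inf_le_left : X ⊓ X' ≤ X) hp⟩
    calc X = X ⊓ X' := hXeq.symm
      _ ≤ X' := inf_le_right
  let f : {X // X ∈ poset B} → {W // W ∈ (poset B).image (· ⊓ Y)} :=
    fun a => ⟨a.1 ⊓ Y, Finset.mem_image_of_mem _ a.2⟩
  have hbij : Function.Bijective f := by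
    constructor
    · intro a b hab
      have h : a.1 ⊓ Y = b.1 ⊓ Y := congrArg Subtype.val hab
      exact Subtype.ext (le_antisymm (key _ a.2 _ b.2 h.le) (key _ b.2 _ a.2 h.ge))
    · rintro ⟨W, hW⟩
      obtain ⟨X, hX, rfl⟩ := Finset.mem_image.mp hW
      exact ⟨⟨X, hX⟩, rfl⟩
  refine ⟨Equiv.ofBijective f hbij, fun a => rfl, fun a b => ?_⟩
  constructor
  · intro h
    exact inf_le_inf_right Y h
  · intro h
    exact key _ a.2 _ b.2 h

end HypArr
end
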